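/- arXiv:2510.06019 — 2 statements merged into one kernel-verified Lean document; each statement's English description precedes it below -/
import Mathlib

section
/- If every color occurring in M₁ and every color occurring in M₂ is nonempty and Γ is based on a finite set 𝔠, then the closure of a finite family of multisets over Γ under single-pair multiset fusion restricted to multisets of cardinality at most k (the k-multiset fusion closure) is finite. -/
lemma multiset_card_le_finite (α : Type*) [Finite α] (k : ℕ) :
    {M : Multiset α | Multiset.card M ≤ k}.Finite := by
  have : {M : Multiset α | Multiset.card M ≤ k} ⊆
      (fun l : List α => (l : Multiset α)) '' {l | l.length ≤ k} := by
    rintro M hM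
    induction M using Quot.ind with
    | _ l => exact ⟨l, by simpa using hM, rfl⟩
  exact ((List.finite_length_le α k).image _).subset this

/-- Single-pair multiset fusion. -/
def fusion {𝔠 : Type*} [DecidableEq 𝔠] (M₁ M₂ : Multiset (Finset 𝔠)) :
    Set (Multiset (Finset 𝔠)) :=
  {M | ∃ γ₁ ∈ M₁, ∃ γ₂ ∈ M₂, γ₁ ∩ γ₂ = ∅ ∧
    M = (γ₁ ∪ γ₂) ::ₘ ((M₁ - {γ₁}) + (M₂ - {γ₂}))}

/-- Single-pair `k`-multiset fusion: submultisets of cardinality at most `k`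
of results of single-pair fusion. -/
def kfusion {𝔠 : Type*} [DecidableEq 𝔠] (k : ℕ) (N₁ N₂ : Multiset (Finset 𝔠)) :
    Set (Multiset (Finset 𝔠)) :=
  {M | ∃ M' ∈ fusion N₁ N₂, M ≤ M' ∧ Multiset.card M ≤ k}

/-- The `k`-multiset fusion closure of a family `𝓜` of multisets: the least set
containing `𝓜` and closed under single-pair `k`-multiset fusion. -/
inductive KClos {𝔠 : Type*} [DecidableEq 𝔠] (k : ℕ) (𝓜 : Set (Multiset (Finset 𝔠))) :
    Multiset (Finset 𝔠) → Prop
  | base {M} : M ∈ 𝓜 → KClos k 𝓜 M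
  | step {M₁ M₂ M} : KClos k 𝓜 M₁ → KClos k 𝓜 M₂ → M ∈ kfusion k M₁ M₂ → KClos k 𝓜 M

theorem kclos_finite {𝔠 : Type*} [DecidableEq 𝔠] [Fintype 𝔠] (k : ℕ)
    (𝓜 : Set (Multiset (Finset 𝔠))) (hfin : 𝓜.Finite)
    (hcard : ∀ M ∈ 𝓜, Multiset.card M ≤ k)
    (hne : ∀ M ∈ 𝓜, ∀ γ ∈ M, γ ≠ (∅ : Finset 𝔠)) :
    {M | KClos k 𝓜 M}.Finite := by
  apply Set.Finite.subset (multiset_card_le_finite (Finset 𝔠) k)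
  intro M hM
  induction hM with
  | base h => exact hcard _ h
  | step _ _ hf _ _ => obtain ⟨M', _, _, hk⟩ := hf; exact hk
end

section
/- For any multisets M₁', M₂' over Γ of cardinality ≤ k and any M' in their single-pair k-multiset fusion, and any supersets M₁ ⊇ M₁', M₂ ⊇ M₂' (multiset inclusion), there exists M ∈ M₁ ⋈ M₂ with M' ⊆ M. -/
theorem fusion_of_kfusion {𝔠 : Type*} [DecidableEq 𝔠] (k : ℕ)
    (M₁' M₂' M₁ M₂ M' : Multiset (Finset 𝔠))
    (h₁ : Multiset.card M₁' ≤ k) (h₂ : Multiset.card M₂' ≤ k)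
    (hM' : M' ∈ kfusion k M₁' M₂') (hs₁ : M₁' ≤ M₁) (hs₂ : M₂' ≤ M₂) :
    ∃ M ∈ fusion M₁ M₂, M' ≤ M := by
  obtain ⟨Mf, ⟨γ₁, hγ₁, γ₂, hγ₂, hdisj, rfl⟩, hle, _⟩ := hM'
  refine ⟨(γ₁ ∪ γ₂) ::ₘ ((M₁ - {γ₁}) + (M₂ - {γ₂})),
    ⟨γ₁, Multiset.mem_of_le hs₁ hγ₁, γ₂, Multiset.mem_of_le hs₂ hγ₂, hdisj, rfl⟩, ?_⟩
  exact hle.trans (Multiset.cons_le_cons _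
    (add_le_add (tsub_le_tsub_right hs₁ _) (tsub_le_tsub_right hs₂ _)))
end
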